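/- arXiv:0911.2048 — 4 statements merged into one kernel-verified Lean document; each statement's English description precedes it below -/
import Mathlib

section
/- Let G be a finite group of order n and k ≥ 1 an integer with gcd(k,n) > 1. Then G is not k-round. (Indeed, if p is any prime divisor of gcd(k,n) and g is any 1-1 cycle of length n over G, then the cycle i ↦ g(i)^k takes the value 1 at least p times.) -/
/-! If a prime `p` divides both `k` and `|G|`, Cauchy's theorem gives a subgroup of order `p`, all
of whose elements satisfy `x ^ k = 1`; so `x ↦ x ^ k` is not injective, and neither is
`i ↦ g i ^ k` for any bijective cycle `g`. A `k`-round cycle, on the other hand, is bijective and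
makes `i ↦ g i ^ k` bijective (take all `mⱼ = 0`). -/

/-- A cycle of length `n = Nat.card G` over `G` is a function `ZMod n → G`.
It is `k`-round if for all integers `m₁, …, m_k`, the map
`i ↦ g (i+m₁) * g (i+m₂) * ⋯ * g (i+m_k)` is a bijection from `ZMod n` to `G`. -/
def IsRoundCycle (G : Type*) [Group G] (k : ℕ) (g : ZMod (Nat.card G) → G) : Prop :=
  ∀ m : Fin k → ℤ,
    Function.Bijective fun i : ZMod (Nat.card G) =>
      (List.ofFn fun j : Fin k => g (i + (m j : ZMod (Nat.card G)))).prod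

/-- `G` is `k`-round if it admits a `k`-round cycle. -/
def IsKRound (G : Type*) [Group G] (k : ℕ) : Prop :=
  ∃ g : ZMod (Nat.card G) → G, IsRoundCycle G k g

/-- A cycle is totally round if it is `k`-round for every `k ≥ 1` with `gcd(k, n) = 1`. -/
def IsTotallyRoundCycle (G : Type*) [Group G] (g : ZMod (Nat.card G) → G) : Prop :=
  ∀ k : ℕ, 1 ≤ k → Nat.gcd k (Nat.card G) = 1 → IsRoundCycle G k g

/-- `G` is round if it admits a totally round cycle. -/
def IsRound (G : Type*) [Group G] : Prop :=
  ∃ g : ZMod (Nat.card G) → G, IsTotallyRoundCycle G g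

theorem prime_le_card_pow_eq_one {G : Type*} [Group G] [Finite G] {p k : ℕ} [Fact p.Prime]
    (hpk : p ∣ k) (hpG : p ∣ Nat.card G) : p ≤ Nat.card {x : G // x ^ k = 1} := by
  obtain ⟨a, ha⟩ := exists_prime_orderOf_dvd_card' p hpG
  have hak : a ^ k = 1 := orderOf_dvd_iff_pow_eq_one.mp (ha ▸ hpk)
  have hzpowers : (Subgroup.zpowers a : Set G) ⊆ {x | x ^ k = 1} := by
    rintro _ ⟨m, rfl⟩
    change (a ^ m) ^ k = 1
    rw [← zpow_natCast, ← zpow_mul, mul_comm, zpow_mul, zpow_natCast, hak, one_zpow]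
  calc p = Nat.card (Subgroup.zpowers a) := by rw [Nat.card_zpowers, ha]
    _ ≤ Nat.card {x : G // x ^ k = 1} := Nat.card_mono (Set.toFinite _) hzpowers

theorem Nat.card_subtype_comp_of_bijective {α β : Type*} {f : α → β} (hf : f.Bijective)
    (P : β → Prop) : Nat.card {a // P (f a)} = Nat.card {b // P b} :=
  Nat.card_congr ((Equiv.ofBijective f hf).subtypeEquiv fun _ => Iff.rfl)

namespace IsRoundCycle

variable {G : Type*} [Group G] {k : ℕ} {g : ZMod (Nat.card G) → G}

theorem bijective_pow (hg : IsRoundCycle G k g) : Function.Bijective fun i => g i ^ k := by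
  simpa only [Int.cast_zero, add_zero, List.ofFn_const, List.prod_replicate] using hg fun _ => 0

theorem bijective [Finite G] (hg : IsRoundCycle G k g) : Function.Bijective g :=
  Function.Injective.bijective_of_nat_card_le
    (fun _ _ hij => hg.bijective_pow.injective (congrArg (· ^ k) hij)) (Nat.card_zmod _).ge

theorem card_pow_eq_one_le_one (hg : IsRoundCycle G k g) :
    Nat.card {i // g i ^ k = 1} ≤ 1 :=
  (Nat.card_le_card_of_injective (fun _ => ()) fun x y _ =>
    Subtype.ext (hg.bijective_pow.injective (x.2.trans y.2.symm))).trans_eq Nat.card_unique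

end IsRoundCycle

theorem statement4_general (G : Type*) [Group G] [Finite G] (k : ℕ)
    (h : 1 < Nat.gcd k (Nat.card G)) :
    ¬ IsKRound G k ∧
      ∀ p : ℕ, p.Prime → p ∣ Nat.gcd k (Nat.card G) →
        ∀ g : ZMod (Nat.card G) → G, Function.Bijective g →
          p ≤ Nat.card {i : ZMod (Nat.card G) // g i ^ k = 1} := by
  have many_roots : ∀ p : ℕ, p.Prime → p ∣ Nat.gcd k (Nat.card G) →
      ∀ g : ZMod (Nat.card G) → G, Function.Bijective g →
        p ≤ Nat.card {i : ZMod (Nat.card G) // g i ^ k = 1} := by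
    intro p hp hpd g hg
    have : Fact p.Prime := ⟨hp⟩
    rw [Nat.card_subtype_comp_of_bijective hg (· ^ k = 1)]
    exact prime_le_card_pow_eq_one (hpd.trans (Nat.gcd_dvd_left _ _))
      (hpd.trans (Nat.gcd_dvd_right _ _))
  refine ⟨?_, many_roots⟩
  rintro ⟨g, hg⟩
  have hp := Nat.minFac_prime h.ne'
  have hp_le := many_roots _ hp (Nat.minFac_dvd _) g hg.bijective
  have hle_one := hg.card_pow_eq_one_le_one
  have := hp.two_le
  omega

/-- Let `G` be a finite group of order `n` and `k ≥ 1` with `gcd(k, n) > 1`. Then `G` is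
not `k`-round. Indeed, for any prime `p` dividing `gcd(k, n)` and any 1-1 cycle `g` of
length `n` over `G`, the cycle `i ↦ g(i)^k` takes the value `1` at least `p` times. -/
theorem statement4 (G : Type*) [Group G] [Finite G] (k : ℕ) (hk : 1 ≤ k)
    (h : 1 < Nat.gcd k (Nat.card G)) :
    ¬ IsKRound G k ∧
      ∀ p : ℕ, p.Prime → p ∣ Nat.gcd k (Nat.card G) →
        ∀ g : ZMod (Nat.card G) → G, Function.Bijective g →
          p ≤ Nat.card {i : ZMod (Nat.card G) // g i ^ k = 1} :=
  statement4_general G k h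
end

section
/- Let G be a finite group, k ≥ 1 an integer, and H a normal subgroup of G such that every coset of H in G contains an element that commutes with all elements of H. If both H and the quotient group G/H are k-round, then G is k-round. -/
theorem List.prod_ofFn_mul_of_commute {M : Type*} [Monoid M] {k : ℕ} (x y : Fin k → M)
    (h : ∀ i j, Commute (y i) (x j)) :
    (List.ofFn fun j => x j * y j).prod = (List.ofFn x).prod * (List.ofFn y).prod := by
  induction k with
  | zero => simp
  | succ k ih =>
    have hy₀ : Commute (y 0) (List.ofFn fun j => x j.succ).prod :=
      Commute.list_prod_right _ _ fun z hz => by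
        obtain ⟨j, rfl⟩ := List.mem_ofFn.mp hz
        exact h 0 j.succ
    simp only [List.ofFn_succ, List.prod_cons]
    rw [ih (fun j => x j.succ) (fun j => y j.succ) fun i j => h i.succ j.succ, mul_assoc,
      ← mul_assoc (y 0), hy₀.eq, mul_assoc, mul_assoc]

namespace ZMod

variable {n t : ℕ}

/-- Writing `i.val = r + t * q` with `r < t`, this is `q` read in `ZMod s`; the digit `r` is
`(i.cast : ZMod t)`. -/
def highDigit (t s : ℕ) (i : ZMod n) : ZMod s := ((i.val / t : ℕ) : ZMod s)

def carry (s : ℕ) (u : ZMod t) (μ : ZMod n) : ZMod s := (((u.val + μ.val) / t : ℕ) : ZMod s)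

variable {s : ℕ}

theorem val_cast_eq_val_mod [NeZero n] (i : ZMod n) : (i.cast : ZMod t).val = i.val % t := by
  rw [ZMod.cast_eq_val, ZMod.val_natCast]

theorem highDigit_add [NeZero n] [NeZero t] (h : n = t * s) (i μ : ZMod n) :
    highDigit t s (i + μ) = highDigit t s i + carry s (i.cast : ZMod t) μ := by
  have ht : 0 < t := Nat.pos_of_neZero t
  have hmod : ∀ x, x % n / t % s = x / t % s := fun x => by
    rw [h, Nat.mod_mul_right_div_self, Nat.mod_mod]
  have hdiv : (i.val + μ.val) / t = i.val / t + (i.val % t + μ.val) / t := by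
    conv_lhs => rw [← Nat.mod_add_div i.val t]
    rw [add_right_comm, Nat.add_mul_div_left _ _ ht, add_comm]
  simp only [highDigit, carry, val_cast_eq_val_mod, ZMod.val_add]
  rw [← Nat.cast_add, ← hdiv, ZMod.natCast_eq_natCast_iff', hmod]

theorem eq_of_cast_eq_of_highDigit_eq [NeZero n] (h : n = t * s) {i i' : ZMod n}
    (hlow : (i.cast : ZMod t) = i'.cast) (hhigh : highDigit t s i = highDigit t s i') :
    i = i' := by
  have hval := fun j : ZMod n => Nat.div_lt_of_lt_mul (h ▸ j.val_lt : j.val < t * s)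
  have hmod : i.val % t = i'.val % t := by
    simpa only [val_cast_eq_val_mod] using congrArg ZMod.val hlow
  have hdiv : i.val / t = i'.val / t := by
    simpa only [highDigit, ZMod.val_natCast, Nat.mod_eq_of_lt (hval _)] using
      congrArg ZMod.val hhigh
  apply ZMod.val_injective
  rw [← Nat.mod_add_div i.val t, ← Nat.mod_add_div i'.val t, hmod, hdiv]

end ZMod

theorem IsRoundCycle.bijective_prod_shift {G : Type*} [Group G] {k : ℕ}
    {g : ZMod (Nat.card G) → G} (hg : IsRoundCycle G k g) (μ : Fin k → ZMod (Nat.card G)) :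
    Function.Bijective fun i => (List.ofFn fun j => g (i + μ j)).prod := by
  simpa only [ZMod.intCast_zmod_cast] using hg fun j => (μ j).cast

section LiftCycle

open ZMod

variable {G : Type*} [Group G] {H : Subgroup G}
  (σ : G ⧸ H → G) (a : ZMod (Nat.card H) → H) (b : ZMod (Nat.card (G ⧸ H)) → G ⧸ H)

noncomputable def liftCycle (i : ZMod (Nat.card G)) : G :=
  σ (b i.cast) * a (highDigit (Nat.card (G ⧸ H)) (Nat.card H) i)

variable {σ}

theorem mk_liftCycle [H.Normal] (hσ : ∀ q, (σ q : G ⧸ H) = q) (i : ZMod (Nat.card G)) :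
    QuotientGroup.mk' H (liftCycle σ a b i) = b i.cast := by
  simp [liftCycle, hσ]

theorem prod_liftCycle_add [Finite G] (hσH : ∀ q, ∀ h ∈ H, Commute (σ q) h) {k : ℕ}
    (i : ZMod (Nat.card G)) (μ : Fin k → ZMod (Nat.card G)) :
    (List.ofFn fun j => liftCycle σ a b (i + μ j)).prod =
      (List.ofFn fun j => σ (b (i.cast + (μ j).cast))).prod *
        ((List.ofFn fun j => a (highDigit (Nat.card (G ⧸ H)) _ i +
          carry _ (i.cast : ZMod (Nat.card (G ⧸ H))) (μ j))).prod : H) := by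
  have hn := H.card_eq_card_quotient_mul_card_subgroup
  rw [Subgroup.val_list_prod, List.map_ofFn, Function.comp_def,
    ← List.prod_ofFn_mul_of_commute _ _ fun _ _ => (hσH _ _ (a _).2).symm]
  simp only [liftCycle, highDigit_add hn, cast_add ⟨_, hn⟩]

theorem isRoundCycle_liftCycle [H.Normal] [Finite G] (hσ : ∀ q, (σ q : G ⧸ H) = q)
    (hσH : ∀ q, ∀ h ∈ H, Commute (σ q) h) {k : ℕ} {a b} (ha : IsRoundCycle H k a)
    (hb : IsRoundCycle (G ⧸ H) k b) : IsRoundCycle G k (liftCycle σ a b) := by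
  have hn := H.card_eq_card_quotient_mul_card_subgroup
  intro m
  refine Function.Injective.bijective_of_nat_card_le (fun i i' hP => ?_) (by simp)
  set μ : Fin k → ZMod (Nat.card G) := fun j => m j
  have hlow : (i.cast : ZMod (Nat.card (G ⧸ H))) = i'.cast := by
    apply (hb.bijective_prod_shift fun j => (μ j).cast).injective
    have hq := congrArg (QuotientGroup.mk' H) hP
    simpa only [map_list_prod, List.map_ofFn, Function.comp_def, mk_liftCycle _ _ hσ,
      cast_add ⟨_, hn⟩] using hq
  have hhigh : highDigit (Nat.card (G ⧸ H)) (Nat.card H) i =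
      highDigit (Nat.card (G ⧸ H)) (Nat.card H) i' := by
    apply (ha.bijective_prod_shift fun j =>
      carry (Nat.card H) (i.cast : ZMod (Nat.card (G ⧸ H))) (μ j)).injective
    rw [prod_liftCycle_add a b hσH, prod_liftCycle_add a b hσH, ← hlow] at hP
    exact Subtype.coe_injective (mul_left_cancel hP)
  exact eq_of_cast_eq_of_highDigit_eq hn hlow hhigh

end LiftCycle

theorem statement10_general (G : Type*) [Group G] [Finite G] (k : ℕ)
    (H : Subgroup G) [H.Normal]
    (hcoset : ∀ g : G, ∃ x : G, g⁻¹ * x ∈ H ∧ ∀ h ∈ H, x * h = h * x)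
    (h₁ : IsKRound H k) (h₂ : IsKRound (G ⧸ H) k) :
    IsKRound G k := by
  choose x hxH hx using hcoset
  obtain ⟨a, ha⟩ := h₁
  obtain ⟨b, hb⟩ := h₂
  have hσ (q : G ⧸ H) : (x q.out : G ⧸ H) = q :=
    (QuotientGroup.eq.2 (hxH q.out)).symm.trans q.out_eq'
  exact ⟨_, isRoundCycle_liftCycle hσ (fun q => hx q.out) ha hb⟩

/-- If `H` is a normal subgroup of a finite group `G` such that every coset of `H`
contains an element commuting with all elements of `H`, and both `H` and `G/H` are
`k`-round, then `G` is `k`-round. -/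
theorem statement10 (G : Type*) [Group G] [Finite G] (k : ℕ) (hk : 1 ≤ k)
    (H : Subgroup G) [H.Normal]
    (hcoset : ∀ g : G, ∃ x : G, g⁻¹ * x ∈ H ∧ ∀ h ∈ H, x * h = h * x)
    (h₁ : IsKRound H k) (h₂ : IsKRound (G ⧸ H) k) :
    IsKRound G k :=
  statement10_general G k H hcoset h₁ h₂
end

section
/- Let G be a finite group of order n and set K = (n+1)!. If a cycle g of length n over G is k-round for every integer k with 1 ≤ k ≤ K and gcd(k,n) = 1, then g is totally round. -/
open Function Nat

theorem exists_lt_eq_of_forall_bijective {α β : Type*} [Finite α] (f : ℕ → α → β)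
    (hf : ∀ t ≤ (Nat.card α)!, Bijective (f t)) :
    ∃ x y, x < y ∧ y ≤ (Nat.card α)! ∧ f x = f y := by
  classical
  have := Fintype.ofFinite α
  let e₀ := Equiv.ofBijective (f 0) (hf 0 (Nat.zero_le _))
  have := Fintype.ofEquiv α e₀
  let e : Fin ((Nat.card α)! + 1) → α ≃ β :=
    fun t => Equiv.ofBijective (f t) (hf t (Nat.lt_succ_iff.mp t.isLt))
  obtain ⟨a, b, hab, he⟩ := Fintype.exists_ne_map_eq_of_card_lt e (by
    rw [Fintype.card_equiv e₀, Fintype.card_fin, Nat.card_eq_fintype_card]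
    exact Nat.lt_succ_self _)
  have hfab : f a = f b := congrArg DFunLike.coe he
  rcases Fin.lt_or_lt_of_ne hab with h | h
  · exact ⟨a, b, h, Nat.lt_succ_iff.mp b.isLt, hfab⟩
  · exact ⟨b, a, h, Nat.lt_succ_iff.mp a.isLt, hfab.symm⟩

section ShiftProd

variable {n : ℕ} {M : Type*} [Monoid M]

def shiftProd (g : ZMod n → M) (l : List ℤ) (i : ZMod n) : M :=
  (l.map fun a : ℤ => g (i + (a : ZMod n))).prod

theorem shiftProd_append (g : ZMod n → M) (l₁ l₂ : List ℤ) :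
    shiftProd g (l₁ ++ l₂) = shiftProd g l₁ * shiftProd g l₂ := by
  funext i
  simp only [shiftProd, List.map_append, List.prod_append, Pi.mul_apply]

theorem shiftProd_ofFn (g : ZMod n → M) {k : ℕ} (m : Fin k → ℤ) :
    shiftProd g (List.ofFn m) = fun i => (List.ofFn fun j => g (i + m j)).prod := by
  funext i
  simp only [shiftProd, List.map_ofFn, comp_def]

theorem shiftProd_eq_take_append_drop (g : ZMod n → M) (l : List ℤ) {a b : ℕ}
    (h : shiftProd g (l.take a) = shiftProd g (l.take b)) :
    shiftProd g l = shiftProd g (l.take a ++ l.drop b) := by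
  rw [shiftProd_append, h, ← shiftProd_append, List.take_append_drop]

end ShiftProd

theorem isRoundCycle_iff (G : Type*) [Group G] (k : ℕ) (g : ZMod (Nat.card G) → G) :
    IsRoundCycle G k g ↔ ∀ l : List ℤ, l.length = k → Bijective (shiftProd g l) := by
  constructor
  · rintro hg l rfl
    rw [← List.ofFn_get l, shiftProd_ofFn]
    exact hg _
  · intro hg m
    rw [← shiftProd_ofFn]
    exact hg _ (List.length_ofFn)

theorem one_add_mul_lt_of_factorial_lt {n k x : ℕ} (hk : (n + 1)! < k) (hx : x ≤ n !) :
    1 + x * n < k := by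
  have : x * n ≤ n ! * n := Nat.mul_le_mul_right n hx
  have := Nat.factorial_pos n
  rw [Nat.factorial_succ] at hk
  nlinarith

theorem IsRoundCycle.of_shorter {G : Type*} [Group G] [Finite G] {g : ZMod (Nat.card G) → G}
    {k : ℕ} (hk : (Nat.card G + 1)! < k) (hcop : Nat.gcd k (Nat.card G) = 1)
    (hround : ∀ s, 1 ≤ s → s < k → Nat.gcd s (Nat.card G) = 1 → IsRoundCycle G s g) :
    IsRoundCycle G k g := by
  have : NeZero (Nat.card G) := ⟨Nat.card_pos.ne'⟩
  rw [isRoundCycle_iff]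
  intro l hl
  have hprefix : ∀ x ≤ (Nat.card (ZMod (Nat.card G)))!,
      Bijective (shiftProd g (l.take (1 + x * Nat.card G))) := by
    intro x hx
    rw [Nat.card_zmod] at hx
    have hlt := one_add_mul_lt_of_factorial_lt hk hx
    refine (isRoundCycle_iff G _ g).mp (hround _ (Nat.le_add_right 1 _) hlt ?_) _ ?_
    · rw [Nat.gcd_add_mul_right_left, Nat.gcd_one_left]
    · rw [List.length_take, hl]
      omega
  obtain ⟨x, y, hxy, hy, heq⟩ := exists_lt_eq_of_forall_bijective _ hprefix
  rw [Nat.card_zmod] at hy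
  have hylt := one_add_mul_lt_of_factorial_lt hk hy
  have hmul : x * Nat.card G < y * Nat.card G := Nat.mul_lt_mul_of_pos_right hxy Nat.card_pos
  have hgap : (y - x) * Nat.card G = y * Nat.card G - x * Nat.card G := Nat.sub_mul _ _ _
  have hlen : (l.take (1 + x * Nat.card G) ++ l.drop (1 + y * Nat.card G)).length
      + (y - x) * Nat.card G = k := by
    simp only [List.length_append, List.length_take, List.length_drop, hl]
    omega
  rw [shiftProd_eq_take_append_drop g l heq]
  refine (isRoundCycle_iff G _ g).mp (hround _ ?_ (by omega) ?_) _ rfl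
  · simp only [List.length_append, List.length_take, hl]
    omega
  · rwa [← hlen, Nat.gcd_add_mul_right_left] at hcop

/-- Let `G` be a finite group of order `n` and set `K = (n+1)!`. If a cycle `g` of
length `n` over `G` is `k`-round for every `1 ≤ k ≤ K` with `gcd(k, n) = 1`, then `g`
is totally round. -/
theorem statement12 (G : Type*) [Group G] [Finite G] (g : ZMod (Nat.card G) → G)
    (h : ∀ k : ℕ, 1 ≤ k → k ≤ (Nat.card G + 1).factorial →
      Nat.gcd k (Nat.card G) = 1 → IsRoundCycle G k g) :
    IsTotallyRoundCycle G g := by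
  intro k
  induction k using Nat.strong_induction_on with
  | _ k ih =>
    intro hk hcop
    by_cases hK : k ≤ (Nat.card G + 1)!
    · exact h k hk hK hcop
    · exact IsRoundCycle.of_shorter (not_le.mp hK) hcop fun s hs hsk => ih s hsk hs
end

section
/- Every finite nilpotent group of odd order is D^∞-balanced: it admits a cycle g of some length L divisible by the order n of the group such that D^r(g) is balanced for every integer r ≥ 0. -/
/-- The difference operator `D` on cycles of length `L` over `G`:
`D(g)(i) = g(i) * g(i+1)⁻¹`. -/
def Dop {G : Type*} [Group G] {L : ℕ} (g : ZMod L → G) : ZMod L → G :=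
  fun i => g i * (g (i + 1))⁻¹

/-- A cycle of length `L` over a group `G` of order `n` (with `n ∣ L`) is balanced if
every element of `G` occurs exactly `L / n` times among its values. -/
def IsBalanced (G : Type*) [Group G] {L : ℕ} (g : ZMod L → G) : Prop :=
  ∀ x : G, Nat.card {i : ZMod L // g i = x} = L / Nat.card G

/-!
Induction on `|G|`. A nontrivial nilpotent group has a central element `z ≠ 1`; let `m` be its
(odd) order and `g_Q` a `D^∞`-balanced cycle of even length `L` on `Q = G ⧸ ⟨z⟩`. Lift `g_Q` to
`G` along `ℤ/Lmℤ → ℤ/Lℤ` and multiply the `i`-th term by `t(i)^⌊i/L⌋`, where `t(i) = z^{(-1)^i}`.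
Then `g(i + L) = g(i) t(i)`, and since `t` is central with `t(i + 1) = t(i)⁻¹`, each application
of `D` squares the factor: `D^r g(i + L) = D^r g(i) t(i)^{2^r}`. As `m` is odd, `t(i)^{2^r}` still
generates `⟨z⟩`, so along each residue class mod `L` the cycle `D^r g` runs exactly once through a
coset of `⟨z⟩`, and the balance of `D^r g_Q` lifts to that of `D^r g`.
-/

open Subgroup

def HasDInfBalancedCycle (G : Type*) [Group G] (L : ℕ) : Prop :=
  ∃ g : ZMod L → G, ∀ r : ℕ, IsBalanced G (Dop^[r] g)

section Dop

variable {G : Type*} [Group G]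

theorem semiconj_comp_ringHom_Dop {N L : ℕ} (red : ZMod N →+* ZMod L) :
    Function.Semiconj (fun f : ZMod L → G => f ∘ red) Dop Dop := by
  intro f
  ext i
  simp [Dop]

theorem semiconj_monoidHom_comp_Dop {K : Type*} [Group K] {L : ℕ} (φ : G →* K) :
    Function.Semiconj (fun f : ZMod L → G => φ ∘ f) Dop Dop := by
  intro f
  ext i
  simp [Dop]

variable {N : ℕ} {c : ZMod N} {g t : ZMod N → G}

theorem Dop_add_eq_mul_sq (ht : ∀ i, t i ∈ center G) (halt : ∀ i, t (i + 1) = (t i)⁻¹)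
    (hg : ∀ i, g (i + c) = g i * t i) (i : ZMod N) :
    Dop g (i + c) = Dop g i * t i ^ 2 := by
  have hcomm : (g (i + 1))⁻¹ * t i ^ 2 = t i ^ 2 * (g (i + 1))⁻¹ :=
    mem_center_iff.mp (pow_mem (ht i) 2) _
  simp only [Dop, add_right_comm i c 1, hg, halt, mul_inv_rev, inv_inv]
  rw [mul_assoc (g i) _ (t i ^ 2), hcomm, sq]
  simp only [mul_assoc]

theorem iterate_Dop_add_eq_mul_pow (ht : ∀ i, t i ∈ center G)
    (halt : ∀ i, t (i + 1) = (t i)⁻¹) (hg : ∀ i, g (i + c) = g i * t i) (r : ℕ) (i : ZMod N) :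
    Dop^[r] g (i + c) = Dop^[r] g i * t i ^ 2 ^ r := by
  induction r generalizing i with
  | zero => simpa using hg i
  | succ r ih =>
    simp only [Function.iterate_succ_apply']
    rw [Dop_add_eq_mul_sq (fun i => pow_mem (ht i) _) (fun i => by rw [halt, inv_pow]) ih,
      ← pow_mul, ← pow_succ]

end Dop

section NegOnePow

variable {G : Type*} [Group G] {N : ℕ} [NeZero N]

theorem neg_one_pow_val_add_natCast (hN : Even N) (i : ZMod N) (k : ℕ) :
    (-1 : ℤ) ^ (i + k).val = (-1) ^ i.val * (-1) ^ k := by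
  rw [ZMod.val_add, ZMod.val_natCast, Nat.add_mod_mod, ← pow_add, neg_one_pow_eq_pow_mod_two,
    Nat.mod_mod_of_dvd _ hN.two_dvd, ← neg_one_pow_eq_pow_mod_two]

theorem zpow_neg_one_pow_val_add_one (hN : Even N) (z : G) (i : ZMod N) :
    z ^ (-1 : ℤ) ^ (i + 1).val = (z ^ (-1 : ℤ) ^ i.val)⁻¹ := by
  have h := neg_one_pow_val_add_natCast hN i 1
  rw [Nat.cast_one] at h
  rw [h, pow_one, mul_neg_one, zpow_neg]

theorem zpow_neg_one_pow_val_add_of_even (hN : Even N) {k : ℕ} (hk : Even k) (z : G)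
    (i : ZMod N) :
    z ^ (-1 : ℤ) ^ (i + k).val = z ^ (-1 : ℤ) ^ i.val := by
  rw [neg_one_pow_val_add_natCast hN, hk.neg_one_pow, mul_one]

end NegOnePow

theorem zpowers_zpow_neg_one_pow {G : Type*} [Group G] (z : G) (n : ℕ) :
    zpowers (z ^ (-1 : ℤ) ^ n) = zpowers z := by
  rcases neg_one_pow_eq_or ℤ n with h | h <;> simp [h]

theorem val_add_div_modEq {L m : ℕ} [NeZero (L * m)] (hL : 0 < L) (i : ZMod (L * m)) :
    (i + L).val / L ≡ i.val / L + 1 [MOD m] := by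
  rw [ZMod.val_add, ZMod.val_natCast, Nat.add_mod_mod, Nat.mod_mul_right_div_self,
    Nat.add_div_right _ hL]
  exact Nat.mod_modEq _ _

theorem zpowers_pow_eq_of_coprime {G : Type*} [Group G] {x : G} {k : ℕ}
    (h : k.Coprime (orderOf x)) : zpowers (x ^ k) = zpowers x :=
  le_antisymm (zpowers_le.mpr (pow_mem (mem_zpowers x) k))
    (zpowers_le.mpr (mem_zpowers_pow_iff.mpr h))

theorem exists_lt_eq_add_mul_of_ringHom_eq {L m : ℕ} [NeZero (L * m)]
    (red : ZMod (L * m) →+* ZMod L) {i j : ZMod (L * m)} (h : red i = red j) :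
    ∃ k < m, j = i + (k * L : ℕ) := by
  have hdvd : L ∣ (j - i).val := by
    rw [← ZMod.natCast_eq_zero_iff, ← map_natCast red, ZMod.natCast_zmod_val, map_sub, h,
      sub_self]
  obtain ⟨k, hk⟩ := hdvd
  refine ⟨k, ?_, ?_⟩
  · have := (j - i).val_lt
    rw [hk] at this
    exact Nat.lt_of_mul_lt_mul_left this
  · rw [Nat.mul_comm k L, ← hk, ZMod.natCast_zmod_val]
    ring

/-- If `f(i + L) = f(i) t(i)` with `t` an `L`-periodic generator of `H`, the values of `f` on a
residue class mod `L` run exactly once through an `H`-coset. -/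
theorem card_fiber_eq_card_fiber_quotient {G : Type*} [Group G] {H : Subgroup G} [H.Normal]
    {L m : ℕ} [NeZero L] [NeZero m] (red : ZMod (L * m) →+* ZMod L)
    {f t : ZMod (L * m) → G} {gQ : ZMod L → G ⧸ H} (hfQ : ∀ i, (f i : G ⧸ H) = gQ (red i))
    (hf : ∀ i, f (i + L) = f i * t i) (ht : Function.Periodic t (L : ZMod (L * m)))
    (hgen : ∀ i, zpowers (t i) = H) (hm : Nat.card H = m) (x : G) :
    Nat.card {i // f i = x} = Nat.card {ι // gQ ι = x} := by
  have hshift : ∀ i (k : ℕ), f (i + (k * L : ℕ)) = f i * t i ^ k := by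
    intro i k
    induction k with
    | zero => simp
    | succ k ih =>
      rw [Nat.cast_mul, Nat.cast_succ, add_one_mul, ← add_assoc, hf, ← Nat.cast_mul, ih,
        Nat.cast_mul, ht.nat_mul k, pow_succ, mul_assoc]
  have hord : ∀ i, orderOf (t i) = m := fun i => by rw [← Nat.card_zpowers, hgen, hm]
  refine Nat.card_eq_of_bijective
    (fun i => ⟨red i.1, by rw [← hfQ, i.2]⟩) ⟨fun a b hab => ?_, fun b => ?_⟩
  · obtain ⟨i, hi⟩ := a
    obtain ⟨j, hj⟩ := b
    obtain ⟨k, hkm, rfl⟩ := exists_lt_eq_add_mul_of_ringHom_eq red (congrArg Subtype.val hab)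
    have hk : t i ^ k = 1 := by
      rw [hshift, hi] at hj
      simpa using hj
    obtain rfl : k = 0 := Nat.eq_zero_of_dvd_of_lt (hord i ▸ orderOf_dvd_of_pow_eq_one hk) hkm
    simp
  · obtain ⟨ι, hι⟩ := b
    obtain ⟨i, rfl⟩ := ZMod.ringHom_surjective red ι
    have hmem : (f i)⁻¹ * x ∈ zpowers (t i) := by
      rw [hgen, ← QuotientGroup.eq, hfQ, hι]
    obtain ⟨k, hk : t i ^ k = (f i)⁻¹ * x⟩ :=
      (orderOf_pos_iff.mp (hord i ▸ NeZero.pos m)).mem_powers_iff_mem_zpowers.mpr hmem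
    refine ⟨⟨i + (k * L : ℕ), by rw [hshift, hk, mul_inv_cancel_left]⟩, ?_⟩
    simp [map_natCast]

theorem isBalanced_of_subsingleton {G : Type*} [Group G] [Subsingleton G] {L : ℕ}
    (g : ZMod L → G) : IsBalanced G g := by
  intro x
  rw [Nat.card_congr (Equiv.subtypeUnivEquiv fun i => Subsingleton.elim (g i) x), Nat.card_zmod,
    Nat.card_of_subsingleton x, Nat.div_one]

theorem Subgroup.normal_of_le_center {G : Type*} [Group G] {H : Subgroup G}
    (h : H ≤ center G) : H.Normal :=
  ⟨fun a ha g => by rwa [mem_center_iff.mp (h ha) g, mul_inv_cancel_right]⟩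

theorem HasDInfBalancedCycle.of_quotient_zpowers {G : Type*} [Group G] {z : G}
    [(zpowers z).Normal] (hz : z ∈ center G) (hodd : Odd (orderOf z)) {L : ℕ} [NeZero L]
    (hL : Even L) (hQ : HasDInfBalancedCycle (G ⧸ zpowers z) L) :
    HasDInfBalancedCycle G (L * orderOf z) := by
  obtain ⟨gQ, hgQ⟩ := hQ
  have : NeZero (orderOf z) := ⟨hodd.pos.ne'⟩
  let red : ZMod (L * orderOf z) →+* ZMod L := ZMod.castHom (dvd_mul_right L _) _
  let t : ZMod (L * orderOf z) → G := fun i => z ^ (-1 : ℤ) ^ i.val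
  have hN : Even (L * orderOf z) := hL.mul_right _
  have ht_center : ∀ i, t i ∈ center G := fun i => zpow_mem hz _
  have ht_alt : ∀ i, t (i + 1) = (t i)⁻¹ := zpow_neg_one_pow_val_add_one hN z
  have ht_per : Function.Periodic t (L : ZMod (L * orderOf z)) :=
    zpow_neg_one_pow_val_add_of_even hN hL z
  have ht_gen : ∀ i, zpowers (t i) = zpowers z := fun i => zpowers_zpow_neg_one_pow z i.val
  have ht_ord : ∀ i, orderOf (t i) = orderOf z := fun i => by
    rw [← Nat.card_zpowers, ht_gen, Nat.card_zpowers]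
  let g : ZMod (L * orderOf z) → G := fun i => (gQ (red i)).out * t i ^ (i.val / L)
  have hg : ∀ i, g (i + L) = g i * t i := fun i => by
    simp only [g, map_add, map_natCast, ZMod.natCast_self, add_zero, ht_per i, mul_assoc,
      ← pow_succ]
    rw [pow_eq_pow_iff_modEq.mpr]
    rw [ht_ord]
    exact val_add_div_modEq (NeZero.pos L) i
  have hgQ' : QuotientGroup.mk' (zpowers z) ∘ g = gQ ∘ red := funext fun i => by
    simp [g, (QuotientGroup.eq_one_iff _).mpr (pow_mem (ht_gen i ▸ mem_zpowers (t i)) _)]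
  have hcard : Nat.card G = Nat.card (G ⧸ zpowers z) * orderOf z := by
    rw [card_eq_card_quotient_mul_card_subgroup, Nat.card_zpowers]
  refine ⟨g, fun r x => ?_⟩
  have hfQ : ∀ i, ((Dop^[r] g i : G) : G ⧸ zpowers z) = Dop^[r] gQ (red i) := fun i => by
    have h := ((semiconj_monoidHom_comp_Dop (QuotientGroup.mk' (zpowers z))).iterate_right r g)
    rw [Function.comp_def, hgQ', ← ((semiconj_comp_ringHom_Dop red).iterate_right r gQ)] at h
    exact congrFun h i
  have hgen : ∀ i, zpowers (t i ^ 2 ^ r) = zpowers z := fun i => by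
    rw [zpowers_pow_eq_of_coprime, ht_gen]
    exact (Nat.coprime_two_left.mpr (ht_ord i ▸ hodd)).pow_left r
  rw [card_fiber_eq_card_fiber_quotient red hfQ
    (iterate_Dop_add_eq_mul_pow ht_center ht_alt hg r) (fun i => by simp only [ht_per i]) hgen
    (Nat.card_zpowers z) x, hgQ r, hcard, Nat.mul_div_mul_right _ _ (NeZero.pos _)]

theorem hasDInfBalancedCycle_two_mul_card (G : Type*) [Group G] [Finite G]
    [Group.IsNilpotent G] (hodd : Odd (Nat.card G)) :
    HasDInfBalancedCycle G (2 * Nat.card G) := by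
  induction h : Nat.card G using Nat.strong_induction_on generalizing G with
  | _ n ih =>
  subst h
  rcases subsingleton_or_nontrivial G with hG | hG
  · exact ⟨fun _ => 1, fun r => isBalanced_of_subsingleton _⟩
  obtain ⟨⟨z, hz⟩, hz1⟩ := ne_bot_iff_exists_ne_one.mp (Group.IsNilpotent.center_ne_bot G)
  have := normal_of_le_center ((zpowers_le (H := center G)).mpr hz)
  have hcard : Nat.card G = Nat.card (G ⧸ zpowers z) * orderOf z := by
    rw [card_eq_card_quotient_mul_card_subgroup, Nat.card_zpowers]
  rw [hcard, Nat.odd_mul] at hodd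
  have hlt : Nat.card (G ⧸ zpowers z) < Nat.card G := by
    have : orderOf z ≠ 1 := fun h => hz1 (Subtype.ext (orderOf_eq_one_iff.mp h))
    rw [hcard]
    exact lt_mul_of_one_lt_right Nat.card_pos (by have := hodd.2.pos; omega)
  have hQ := ih _ hlt (G ⧸ zpowers z) hodd.1 rfl
  rw [hcard, ← mul_assoc]
  exact hQ.of_quotient_zpowers hz hodd.2 (even_two_mul _)

/-- Every finite nilpotent group of odd order is `D^∞`-balanced: it admits a cycle `g`
of some length `L` divisible by the order of the group such that `D^r(g)` is balanced
for every `r ≥ 0`. -/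
theorem statement17 (G : Type*) [Group G] [Finite G] (hnil : Group.IsNilpotent G)
    (hodd : Odd (Nat.card G)) :
    ∃ L : ℕ, 0 < L ∧ Nat.card G ∣ L ∧
      ∃ g : ZMod L → G, ∀ r : ℕ, IsBalanced G (Dop^[r] g) :=
  ⟨2 * Nat.card G, Nat.mul_pos two_pos Nat.card_pos, dvd_mul_left _ 2,
    hasDInfBalancedCycle_two_mul_card G hodd⟩
end
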